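/- Let B be a left skew brace and let π be a set of prime numbers. If ζ(B) contains no nonzero π-elements, then for every ordinal α the factor ζ_{α+1}(B)/ζ_α(B) of the upper central series contains no nonzero π-elements; in particular the hypercentre of B (the last term of the upper central series) contains no nonzero π-elements. -/

import Mathlib

universe u

/-- A left skew brace: a set with two group structures `(B,+)` and `(B,·)` sharing the
same identity element, satisfying `a·(b+c) = a·b - a + a·c`. -/
class SkewBrace (B : Type u) extends AddGroup B, Group B where
  zero_eq_one : (0 : B) = 1
  skew_distrib : ∀ a b c : B, a * (b + c) = a * b + (-a + a * c)

namespace SkewBrace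

variable {B : Type u} [SkewBrace B]

/-- The star product `a ∗ b = -a + a·b - b`. -/
def sbStar (a b : B) : B := -a + a * b + -b

/-- The additive commutator `[a,b]₊ = -a - b + a + b`. -/
def addCommutator (a b : B) : B := -a + -b + a + b

/-- The multiplicative commutator `[a,b]· = a⁻¹b⁻¹ab`. -/
def mulCommutator (a b : B) : B := a⁻¹ * b⁻¹ * a * b

/-- A subbrace: a subset that is a subgroup of both `(B,+)` and `(B,·)`. -/
structure IsSubbrace (S : Set B) : Prop where
  zero_mem : (0 : B) ∈ S
  add_mem : ∀ ⦃a b : B⦄, a ∈ S → b ∈ S → a + b ∈ S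
  neg_mem : ∀ ⦃a : B⦄, a ∈ S → -a ∈ S
  mul_mem : ∀ ⦃a b : B⦄, a ∈ S → b ∈ S → a * b ∈ S
  inv_mem : ∀ ⦃a : B⦄, a ∈ S → a⁻¹ ∈ S

/-- `J` is an ideal of the subbrace `S`: a subbrace of `S`, normal in `(S,+)` and
`(S,·)`, with `S ∗ J ⊆ J` and `J ∗ S ⊆ J`. -/
structure IsIdealIn (S J : Set B) : Prop where
  subset : J ⊆ S
  isSubbrace : IsSubbrace J
  add_conj_mem : ∀ ⦃b : B⦄, b ∈ S → ∀ ⦃a : B⦄, a ∈ J → b + a + -b ∈ J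
  mul_conj_mem : ∀ ⦃b : B⦄, b ∈ S → ∀ ⦃a : B⦄, a ∈ J → b * a * b⁻¹ ∈ J
  star_mem_left : ∀ ⦃b : B⦄, b ∈ S → ∀ ⦃a : B⦄, a ∈ J → sbStar b a ∈ J
  star_mem_right : ∀ ⦃a : B⦄, a ∈ J → ∀ ⦃b : B⦄, b ∈ S → sbStar a b ∈ J

/-- An ideal of the brace `B`. -/
def IsIdeal (J : Set B) : Prop := IsIdealIn (Set.univ : Set B) J

/-- A left ideal: a subbrace `L` with `B ∗ L ⊆ L`. -/
structure IsLeftIdeal (L : Set B) : Prop where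
  isSubbrace : IsSubbrace L
  star_mem_left : ∀ (b : B), ∀ ⦃a : B⦄, a ∈ L → sbStar b a ∈ L

/-- The ideal of `B` generated by a subset `E`. -/
def idealClosure (E : Set B) : Set B := ⋂₀ {I : Set B | IsIdeal I ∧ E ⊆ I}

/-- The subbrace of `B` generated by a subset `E`. -/
def subbraceClosure (E : Set B) : Set B := ⋂₀ {S : Set B | IsSubbrace S ∧ E ⊆ S}

/-- The set `X_{I,J} = [I,J]₊ ∪ [I,J]· ∪ {i·j - (i+j) : i ∈ I, j ∈ J}`. -/
def commSet (I J : Set B) : Set B :=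
  (AddSubgroup.closure {x : B | ∃ i ∈ I, ∃ j ∈ J, x = addCommutator i j} : Set B) ∪
    (Subgroup.closure {x : B | ∃ i ∈ I, ∃ j ∈ J, x = mulCommutator i j} : Set B) ∪
    {x : B | ∃ i ∈ I, ∃ j ∈ J, x = i * j + -(i + j)}

/-- The commutator ideal `[I,J]^B`: the ideal of `B` generated by `X_{I,J}`. -/
def commIdeal (I J : Set B) : Set B := idealClosure (commSet I J)

/-- The set `X ∗ Y = {x ∗ y : x ∈ X, y ∈ Y}`. -/
def starSet (X Y : Set B) : Set B := {z : B | ∃ x ∈ X, ∃ y ∈ Y, z = sbStar x y}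

/-- The centre of the subbrace `S`. -/
def centreIn (S : Set B) : Set B :=
  {a ∈ S | ∀ b ∈ S, a + b = b + a ∧ a + b = a * b ∧ a + b = b * a}

/-- The centre `ζ(B)` of the brace `B`. -/
def centre (B : Type u) [SkewBrace B] : Set B := centreIn (Set.univ : Set B)

/-- For ideals `J ≤ I` of the subbrace `S`: `I/J` is a central factor of `S`,
i.e. `I/J ≤ ζ(S/J)`. -/
def IsCentralFactorIn (S J I : Set B) : Prop :=
  ∀ ⦃a : B⦄, a ∈ I → ∀ ⦃b : B⦄, b ∈ S →
    -(a + b) + (b + a) ∈ J ∧ -(a + b) + a * b ∈ J ∧ -(a + b) + b * a ∈ J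

/-- The subbrace `S` is centrally nilpotent of class at most `n`: there is a chain of
ideals `0 = I₀ ≤ I₁ ≤ … ≤ Iₙ = S` of `S` with `I_{k+1}/I_k ≤ ζ(S/I_k)`. -/
def CentrallyNilpotentInOfClassLE (S : Set B) (n : ℕ) : Prop :=
  ∃ I : ℕ → Set B, I 0 = {0} ∧ I n = S ∧
    (∀ k ≤ n, IsIdealIn S (I k)) ∧
    (∀ k < n, I k ⊆ I (k + 1)) ∧
    (∀ k < n, IsCentralFactorIn S (I k) (I (k + 1)))

/-- The subbrace `S` is centrally nilpotent. -/
def CentrallyNilpotentIn (S : Set B) : Prop := ∃ n : ℕ, CentrallyNilpotentInOfClassLE S n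

/-- The brace `B` is centrally nilpotent. -/
def CentrallyNilpotent (B : Type u) [SkewBrace B] : Prop :=
  CentrallyNilpotentIn (Set.univ : Set B)

/-- The brace `B` is locally centrally-nilpotent: every finitely generated subbrace is
centrally nilpotent. -/
def LocallyCentrallyNilpotent (B : Type u) [SkewBrace B] : Prop :=
  ∀ E : Finset B, CentrallyNilpotentIn (subbraceClosure (E : Set B))

/-- The (finite) upper central series of `B`: `ζ₀(B) = 0` and
`ζ_{n+1}(B)/ζ_n(B) = ζ(B/ζ_n(B))`. -/
def zetaNat (B : Type u) [SkewBrace B] : ℕ → Set B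
  | 0 => {0}
  | n + 1 =>
    {a : B | ∀ b : B, -(a + b) + (b + a) ∈ zetaNat B n ∧
      -(a + b) + a * b ∈ zetaNat B n ∧ -(a + b) + b * a ∈ zetaNat B n}

/-- The transfinite upper central series of `B`. -/
noncomputable def zetaOrd (B : Type u) [SkewBrace B] (o : Ordinal.{u}) : Set B :=
  Ordinal.limitRecOn o ({0} : Set B)
    (fun _ Z =>
      {a : B | ∀ b : B, -(a + b) + (b + a) ∈ Z ∧ -(a + b) + a * b ∈ Z ∧ -(a + b) + b * a ∈ Z})
    (fun o _ ih => ⋃ (β : {β : Ordinal.{u} // β < o}), ih β.1 β.2)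

/-- The brace `B` is hypercentral: the upper central series reaches `B`. -/
def Hypercentral (B : Type u) [SkewBrace B] : Prop :=
  ∃ o : Ordinal.{u}, zetaOrd B o = Set.univ

/-- The largest ideal of `B` contained in `C`. -/
def idealCore (C : Set B) : Set B := ⋃₀ {I : Set B | IsIdeal I ∧ I ⊆ C}

/-- The lower `B`-central series of an ideal `I`:
`lowerCentralB I n = Γ_{n+1}(I)^B`, so `Γ₁(I)^B = I` and `Γ_{n+1}(I)^B = [Γ_n(I)^B, I]^B`. -/
def lowerCentralB (I : Set B) : ℕ → Set B
  | 0 => I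
  | n + 1 => commIdeal (lowerCentralB I n) I

/-- `I` is a `B`-centrally nilpotent ideal. -/
def BCentrallyNilpotent (I : Set B) : Prop := ∃ n : ℕ, lowerCentralB I n = {0}

/-- The derived series of an ideal with respect to `B`. -/
def derivedB (I : Set B) : ℕ → Set B
  | 0 => I
  | n + 1 => commIdeal (derivedB I n) (derivedB I n)

/-- The preimages in `B` of the derived series of `I/F` with respect to `B/F`. -/
def derivedModB (F I : Set B) : ℕ → Set B
  | 0 => I
  | n + 1 => idealClosure (commSet (derivedModB F I n) (derivedModB F I n) ∪ F)

/-- The Fitting ideal of `B`: the ideal generated by all `B`-centrally nilpotent ideals. -/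
def FitIdeal (B : Type u) [SkewBrace B] : Set B :=
  idealClosure (⋃₀ {I : Set B | IsIdeal I ∧ BCentrallyNilpotent I})

/-- The centraliser of an ideal `I`: the largest ideal `C` with `[C,I]^B = 0`. -/
def idealCentraliser (I : Set B) : Set B :=
  ⋃₀ {C : Set B | IsIdeal C ∧ commIdeal C I ⊆ {0}}

/-- The centraliser of a chief factor `Itop/Ibot`: the largest ideal `C` of `B` with
`[C, Itop]^B ≤ Ibot`. -/
def factorCentraliser (Itop Ibot : Set B) : Set B :=
  ⋃₀ {C : Set B | IsIdeal C ∧ commIdeal C Itop ⊆ Ibot}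

/-- A maximal left ideal of `B`. -/
def IsMaximalLeftIdeal (L : Set B) : Prop :=
  IsLeftIdeal L ∧ L ≠ Set.univ ∧
    ∀ L' : Set B, IsLeftIdeal L' → L ⊆ L' → L' = L ∨ L' = Set.univ

/-- The Frattini ideal of `B`. -/
def FratIdeal (B : Type u) [SkewBrace B] : Set B :=
  (⋂₀ {L : Set B | IsMaximalLeftIdeal L}) ∩ FitIdeal B

/-- The additive torsion set `T₊(B)`. -/
def addTorsion (B : Type u) [SkewBrace B] : Set B := {a : B | ∃ n : ℕ, 0 < n ∧ n • a = 0}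

/-- The multiplicative torsion set `T·(B)`. -/
def mulTorsion (B : Type u) [SkewBrace B] : Set B := {a : B | ∃ n : ℕ, 0 < n ∧ a ^ n = 1}

/-- The order of an element of a brace: the cardinality of the subbrace it generates
(`0` if infinite). -/
noncomputable def elemOrder (a : B) : ℕ := Nat.card ↥(subbraceClosure ({a} : Set B))

/-- `a` is a `π`-element: it is periodic and its order is a `π`-number. -/
def IsPiElement (π : Set ℕ) (a : B) : Prop :=
  0 < elemOrder a ∧ ∀ p : ℕ, p.Prime → p ∣ elemOrder a → p ∈ π

/-- The order of the coset `a + J` in the quotient brace modulo the ideal `J`: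
the number of cosets of `J` in the subbrace generated by `a` together with `J`. -/
noncomputable def elemOrderMod (J : Set B) (a : B) : ℕ :=
  Nat.card ↥((fun x : B => {y : B | -x + y ∈ J}) '' subbraceClosure ({a} ∪ J))

/-- The coset of `a` modulo the ideal `J` is a `π`-element of the quotient brace. -/
def IsPiElementMod (π : Set ℕ) (J : Set B) (a : B) : Prop :=
  0 < elemOrderMod J a ∧ ∀ p : ℕ, p.Prime → p ∣ elemOrderMod J a → p ∈ π

/-- A subideal: a finite chain `S = C₀ ⊴ C₁ ⊴ … ⊴ Cₙ = B`. -/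
def IsSubideal (S : Set B) : Prop :=
  ∃ (n : ℕ) (C : ℕ → Set B), C 0 = S ∧ C n = Set.univ ∧
    (∀ k ≤ n, IsSubbrace (C k)) ∧ ∀ k < n, IsIdealIn (C (k + 1)) (C k)

/-- An ascendant subbrace: an ordinal-indexed ascending chain from `S` to `B`. -/
def IsAscendant (S : Set B) : Prop :=
  ∃ (l : Ordinal.{u}) (C : Ordinal.{u} → Set B), C 0 = S ∧ C l = Set.univ ∧
    (∀ α ≤ l, IsSubbrace (C α)) ∧
    (∀ α < l, IsIdealIn (C (α + 1)) (C α)) ∧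
    ∀ μ ≤ l, Order.IsSuccLimit μ → C μ = ⋃ β < μ, C β

/-- A serial subbrace: there is a complete chain of subbraces containing `S` and `B`
in which each member is an ideal of its immediate successor. -/
def IsSerial (S : Set B) : Prop :=
  ∃ 𝒞 : Set (Set B), S ∈ 𝒞 ∧ Set.univ ∈ 𝒞 ∧
    (∀ D ∈ 𝒞, IsSubbrace D) ∧
    (∀ D ∈ 𝒞, ∀ E ∈ 𝒞, D ⊆ E ∨ E ⊆ D) ∧
    (∀ 𝒟 ⊆ 𝒞, 𝒟.Nonempty → ⋃₀ 𝒟 ∈ 𝒞 ∧ ⋂₀ 𝒟 ∈ 𝒞) ∧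
    ∀ D ∈ 𝒞, ∀ E ∈ 𝒞, D ⊂ E → (∀ F ∈ 𝒞, ¬(D ⊂ F ∧ F ⊂ E)) → IsIdealIn E D

/-- `S` is a maximal `p`-subgroup of `(B,+)`. -/
def IsMaxAddPSubgroup (p : ℕ) (S : AddSubgroup B) : Prop :=
  (∀ a ∈ S, ∃ k : ℕ, p ^ k • a = 0) ∧
    ∀ T : AddSubgroup B, (∀ a ∈ T, ∃ k : ℕ, p ^ k • a = 0) → S ≤ T → T = S

/-- `S` is a maximal `p`-subgroup of `(B,·)`. -/
def IsMaxMulPSubgroup (p : ℕ) (S : Subgroup B) : Prop :=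
  (∀ a ∈ S, ∃ k : ℕ, a ^ p ^ k = 1) ∧
    ∀ T : Subgroup B, (∀ a ∈ T, ∃ k : ℕ, a ^ p ^ k = 1) → S ≤ T → T = S

/-- Formal 2-polynomials of a brace: terms in two variables built from `+`, `-`, `·`,
inverse and the constant `0`. -/
inductive Poly2 : Type
  | X : Poly2
  | Y : Poly2
  | zero : Poly2
  | add : Poly2 → Poly2 → Poly2
  | neg : Poly2 → Poly2
  | mul : Poly2 → Poly2 → Poly2
  | inv : Poly2 → Poly2

/-- Evaluation of a formal 2-polynomial in a brace. -/
def Poly2.eval : Poly2 → B → B → B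
  | .X, a, _ => a
  | .Y, _, b => b
  | .zero, _, _ => 0
  | .add p q, a, b => p.eval a b + q.eval a b
  | .neg p, a, b => -(p.eval a b)
  | .mul p q, a, b => p.eval a b * q.eval a b
  | .inv p, a, b => (p.eval a b)⁻¹

/-- A 2-polynomial is absorbing if it vanishes whenever one variable is `0`. -/
def Poly2.Absorbing (p : Poly2) (B : Type u) [SkewBrace B] : Prop :=
  (∀ x : B, p.eval x (0 : B) = 0) ∧ ∀ y : B, p.eval (0 : B) y = 0

end SkewBrace

open SkewBrace
namespace SkewBrace

variable {B : Type u} [SkewBrace B]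

@[simp] lemma mul_zero' (a : B) : a * (0:B) = a := by
  rw [zero_eq_one, mul_one]

@[simp] lemma zero_mul' (a : B) : (0:B) * a = a := by
  rw [zero_eq_one, one_mul]

/-- The lambda map `b ↦ -a + a·b` as an additive homomorphism. -/
def lam (a : B) : B →+ B where
  toFun b := -a + a * b
  map_zero' := by simp
  map_add' b c := by
    show -a + a * (b + c) = (-a + a * b) + (-a + a * c)
    rw [skew_distrib]
    exact (add_assoc _ _ _).symm

lemma lam_apply (a b : B) : lam a b = -a + a * b := rfl

lemma mul_eq_add_lam (a b : B) : a * b = a + lam a b := by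
  rw [lam_apply, add_neg_cancel_left]

lemma lam_lam (a b c : B) : lam a (lam b c) = lam (a * b) c := by
  have h1 : lam a (lam b c) = - lam a b + lam a (b * c) := by
    rw [lam_apply b c]
    rw [show (-b + b * c) = (-b) + (b*c) from rfl, map_add, map_neg]
  rw [h1, lam_apply, lam_apply, lam_apply, neg_add_rev, neg_neg, mul_assoc,
    add_assoc, add_neg_cancel_left]

lemma sbStar_eq (a b : B) : sbStar a b = lam a b + -b := rfl

lemma lam_eq_star_add (a b : B) : lam a b = sbStar a b + b := by
  rw [sbStar_eq, neg_add_cancel_right]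

end SkewBrace
namespace SkewBrace

variable {B : Type u} [SkewBrace B]

lemma mem_centre_iff {a : B} :
    a ∈ centre B ↔ ∀ b : B, a + b = b + a ∧ a + b = a * b ∧ a + b = b * a := by
  simp [centre, centreIn]

lemma central_comm {a : B} (ha : a ∈ centre B) (b : B) : a + b = b + a :=
  (mem_centre_iff.1 ha b).1

lemma central_mul {a : B} (ha : a ∈ centre B) (b : B) : a * b = a + b :=
  ((mem_centre_iff.1 ha b).2.1).symm

lemma central_mul' {a : B} (ha : a ∈ centre B) (b : B) : b * a = b + a := by
  rw [← (mem_centre_iff.1 ha b).2.2, central_comm ha b]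

lemma central_lam {a : B} (ha : a ∈ centre B) (b : B) : lam b a = a := by
  rw [lam_apply, central_mul' ha, neg_add_cancel_left]

lemma central_star_right {a : B} (ha : a ∈ centre B) (b : B) : sbStar b a = 0 := by
  rw [sbStar_eq, central_lam ha, add_neg_cancel]

lemma central_star_left {a : B} (ha : a ∈ centre B) (b : B) : sbStar a b = 0 := by
  rw [sbStar_eq, lam_apply, central_mul ha, neg_add_cancel_left, add_neg_cancel]

lemma central_conj {a : B} (ha : a ∈ centre B) (b : B) : b + a + -b = a := by
  rw [← central_comm ha b, add_neg_cancel_right]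

lemma central_zero : (0 : B) ∈ centre B := by
  rw [mem_centre_iff]
  intro b
  simp

lemma central_add {u v : B} (hu : u ∈ centre B) (hv : v ∈ centre B) :
    u + v ∈ centre B := by
  rw [mem_centre_iff]
  intro b
  refine ⟨?_, ?_, ?_⟩
  · rw [add_assoc, central_comm hv b, ← add_assoc, central_comm hu b, add_assoc]
  · have : (u+v) * b = (u+v) + b := by
      calc (u+v)*b = (u*v)*b := by rw [central_mul hu v]
        _ = u*(v*b) := mul_assoc _ _ _
        _ = u*(v+b) := by rw [central_mul hv b]
        _ = u+(v+b) := central_mul hu _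
        _ = (u+v)+b := (add_assoc _ _ _).symm
    exact this.symm
  · have : b * (u+v) = b + (u+v) := by
      calc b*(u+v) = b*(u*v) := by rw [central_mul hu v]
        _ = (b*u)*v := (mul_assoc _ _ _).symm
        _ = (b+u)*v := by rw [central_mul' hu b]
        _ = (b+u)+v := central_mul' hv _
        _ = b+(u+v) := add_assoc _ _ _
    rw [this, add_assoc, central_comm hv b, ← add_assoc, central_comm hu b, add_assoc]

lemma central_inv_eq_neg {u : B} (hu : u ∈ centre B) : u⁻¹ = -u := by
  have : u * (-u) = 1 := by rw [central_mul hu, add_neg_cancel, zero_eq_one]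
  exact (eq_inv_of_mul_eq_one_right this).symm

lemma central_neg {u : B} (hu : u ∈ centre B) : -u ∈ centre B := by
  rw [mem_centre_iff]
  intro b
  have hcomm : -u + b = b + -u := by
    have := central_comm hu b
    calc -u + b = -u + (b + u) + -u := by rw [add_assoc, add_assoc, add_neg_cancel, add_zero]
    _ = -u + (u + b) + -u := by rw [← this]
    _ = b + -u := by rw [← add_assoc, neg_add_cancel, zero_add]
  have hmul : (-u) * b = -u + b := by
    have h1 : u * ((-u) * b) = b := by
      rw [← mul_assoc, ← central_inv_eq_neg hu, mul_inv_cancel, one_mul]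
    have h2 : u * ((-u) * b) = u + (-u) * b := central_mul hu _
    rw [h2] at h1
    have := congrArg (fun z => -u + z) h1
    simpa [neg_add_cancel_left] using this
  have hmul' : b * (-u) = b + -u := by
    have h1 : (b * (-u)) * u = b := by
      rw [mul_assoc, ← central_inv_eq_neg hu, inv_mul_cancel, mul_one]
    have h2 : (b + -u) * u = b := by
      rw [central_mul' hu, add_assoc, neg_add_cancel, add_zero]
    have := h1.trans h2.symm
    exact mul_right_cancel this
  exact ⟨hcomm, hmul.symm, hcomm.trans hmul'.symm⟩

end SkewBrace
namespace SkewBrace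

variable {B : Type u} [SkewBrace B]

lemma central_nsmul {u : B} (hu : u ∈ centre B) (n : ℕ) : n • u ∈ centre B := by
  induction n with
  | zero => simpa using central_zero
  | succ k ih => rw [succ_nsmul]; exact central_add ih hu

lemma central_zsmul {u : B} (hu : u ∈ centre B) (k : ℤ) : k • u ∈ centre B := by
  induction k using Int.rec with
  | ofNat n => simpa using central_nsmul hu n
  | negSucc n =>
      rw [negSucc_zsmul]
      exact central_neg (central_nsmul hu (n+1))

lemma central_pow {u : B} (hu : u ∈ centre B) (n : ℕ) : u ^ n = n • u := by
  induction n with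
  | zero => rw [pow_zero, zero_smul, zero_eq_one]
  | succ k ih => rw [pow_succ, central_mul' hu, ih, succ_nsmul]

lemma central_nsmul_add {e : B} (he : e ∈ centre B) (x : B) (n : ℕ) :
    n • (x + e) = n • x + n • e := by
  induction n with
  | zero => simp
  | succ k ih =>
      have hc := central_nsmul he k
      rw [succ_nsmul, succ_nsmul, succ_nsmul, ih, add_assoc (k • x), ← add_assoc (k • e) x e,
        central_comm hc x, add_assoc x, ← add_assoc (k • x)]

lemma central_c1 {u : B} (hu : u ∈ centre B) (b : B) : -(u + b) + (b + u) = 0 := by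
  rw [central_comm hu b, neg_add_cancel]

lemma central_c2 {u : B} (hu : u ∈ centre B) (b : B) : -(u + b) + u * b = 0 := by
  rw [central_mul hu b, neg_add_cancel]

lemma central_c3 {u : B} (hu : u ∈ centre B) (b : B) : -(u + b) + b * u = 0 := by
  rw [central_mul' hu b, ← central_comm hu b, neg_add_cancel]

/-! subbrace closure -/

lemma isSubbrace_sInter {F : Set (Set B)} (hF : ∀ S ∈ F, IsSubbrace S) :
    IsSubbrace (⋂₀ F) := by
  refine ⟨?_, ?_, ?_, ?_, ?_⟩
  · exact fun S hS => (hF S hS).zero_mem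
  · exact fun a b ha hb S hS => (hF S hS).add_mem (ha S hS) (hb S hS)
  · exact fun a ha S hS => (hF S hS).neg_mem (ha S hS)
  · exact fun a b ha hb S hS => (hF S hS).mul_mem (ha S hS) (hb S hS)
  · exact fun a ha S hS => (hF S hS).inv_mem (ha S hS)

lemma isSubbrace_subbraceClosure (E : Set B) : IsSubbrace (subbraceClosure E) :=
  isSubbrace_sInter (fun _ hS => hS.1)

lemma subset_subbraceClosure (E : Set B) : E ⊆ subbraceClosure E :=
  fun _ ha _ hS => hS.2 ha

lemma subbraceClosure_le {E S : Set B} (hS : IsSubbrace S) (hE : E ⊆ S) :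
    subbraceClosure E ⊆ S :=
  Set.sInter_subset_of_mem ⟨hS, hE⟩

lemma IsSubbrace.nsmul_mem {S : Set B} (hS : IsSubbrace S) {a : B} (ha : a ∈ S) (n : ℕ) :
    n • a ∈ S := by
  induction n with
  | zero => simpa using hS.zero_mem
  | succ k ih => rw [succ_nsmul]; exact hS.add_mem ih ha

lemma IsSubbrace.zsmul_mem {S : Set B} (hS : IsSubbrace S) {a : B} (ha : a ∈ S) (k : ℤ) :
    k • a ∈ S := by
  induction k using Int.rec with
  | ofNat n => simpa using hS.nsmul_mem ha n
  | negSucc n => rw [negSucc_zsmul]; exact hS.neg_mem (hS.nsmul_mem ha (n+1))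

lemma isSubbrace_zmultiples {a : B} (ha : a ∈ centre B) :
    IsSubbrace ((AddSubgroup.zmultiples a : AddSubgroup B) : Set B) := by
  have hmem : ∀ x : B, x ∈ (AddSubgroup.zmultiples a : AddSubgroup B) → ∃ k : ℤ, k • a = x :=
    fun x hx => AddSubgroup.mem_zmultiples_iff.1 hx
  refine ⟨AddSubgroup.zero_mem _, fun x y hx hy => AddSubgroup.add_mem _ hx hy,
    fun x hx => AddSubgroup.neg_mem _ hx, ?_, ?_⟩
  · intro x y hx hy
    obtain ⟨j, rfl⟩ := hmem x hx
    obtain ⟨k, rfl⟩ := hmem y hy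
    rw [central_mul (central_zsmul ha j) _, ← add_zsmul]
    exact AddSubgroup.mem_zmultiples_iff.2 ⟨j + k, rfl⟩
  · intro x hx
    obtain ⟨j, rfl⟩ := hmem x hx
    rw [central_inv_eq_neg (central_zsmul ha j)]
    exact AddSubgroup.neg_mem _ hx

lemma subbraceClosure_singleton_central {a : B} (ha : a ∈ centre B) :
    subbraceClosure {a} = ((AddSubgroup.zmultiples a : AddSubgroup B) : Set B) := by
  apply Set.Subset.antisymm
  · exact subbraceClosure_le (isSubbrace_zmultiples ha)
      (Set.singleton_subset_iff.2 (AddSubgroup.mem_zmultiples a))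
  · intro x hx
    obtain ⟨k, rfl⟩ := AddSubgroup.mem_zmultiples_iff.1 hx
    exact (isSubbrace_subbraceClosure {a}).zsmul_mem
      (subset_subbraceClosure {a} rfl) k

lemma elemOrder_central {a : B} (ha : a ∈ centre B) : elemOrder a = addOrderOf a := by
  rw [elemOrder, subbraceClosure_singleton_central ha]
  simpa using Nat.card_zmultiples a

end SkewBrace
namespace SkewBrace

variable {B : Type u} [SkewBrace B]

lemma star_zero_left (b : B) : sbStar (0:B) b = 0 := by
  simp [sbStar]

lemma star_mul_left' (a b c : B) :
    sbStar (a * b) c = sbStar a (sbStar b c) + sbStar b c + sbStar a c := by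
  rw [sbStar_eq (a*b) c, ← lam_lam, lam_eq_star_add b c, map_add,
    lam_eq_star_add a (sbStar b c), lam_eq_star_add a c,
    ← add_assoc (sbStar a (sbStar b c) + sbStar b c) (sbStar a c) c, add_neg_cancel_right]

/-- If the second brace commutator is central, it equals the star product. -/
lemma star_eq_c2 {x g : B} (h2 : -(x+g) + x*g ∈ centre B) :
    sbStar x g = -(x+g) + x*g := by
  have e : -(x+g) + x*g = -g + (sbStar x g + g) := by
    rw [neg_add_rev, add_assoc, sbStar_eq, lam_apply, add_assoc, add_assoc,
      neg_add_cancel, add_zero]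
  have e2 : g + (-(x+g) + x*g) + -g = sbStar x g := by
    rw [e, ← add_assoc g, add_neg_cancel, zero_add, add_neg_cancel_right]
  rw [← central_conj h2 g, e2]

lemma star_pow {x b : B} (hs : sbStar x b ∈ centre B) (k : ℕ) :
    sbStar (x^k) b = k • sbStar x b := by
  induction k with
  | zero => rw [pow_zero, ← zero_eq_one, star_zero_left, zero_smul]
  | succ n ih =>
      rw [pow_succ', star_mul_left', ih, central_star_right (central_nsmul hs n) x,
        zero_add, succ_nsmul]

/-- `x^k = k•x + t•d` for some `t`, where `d` is the self-commutator, if `d` is central. -/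
lemma pow_decomp {x : B} (hd : -(x+x) + x*x ∈ centre B) (k : ℕ) :
    ∃ t : ℕ, x^k = k • x + t • (-(x+x) + x*x) := by
  set d := -(x+x) + x*x with hdef
  have hsd : sbStar x x = d := star_eq_c2 hd
  induction k with
  | zero => exact ⟨0, by rw [pow_zero, ← zero_eq_one, zero_smul, zero_smul, add_zero]⟩
  | succ n ih =>
      obtain ⟨t, ht⟩ := ih
      refine ⟨t + n, ?_⟩
      have hstar : sbStar (x^n) x = n • d := by rw [star_pow (hsd ▸ hd) n, hsd]
      calc x^(n+1) = x^n + lam (x^n) x := by rw [pow_succ, mul_eq_add_lam]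
        _ = x^n + (n • d + x) := by rw [lam_eq_star_add, hstar]
        _ = (n • x + t • d) + (n • d + x) := by rw [ht]
        _ = n • x + (t • d + n • d) + x := by rw [add_assoc, add_assoc, add_assoc]
        _ = n • x + (t + n) • d + x := by rw [add_nsmul]
        _ = n • x + (x + (t + n) • d) := by
              rw [add_assoc, central_comm (central_nsmul hd (t+n)) x]
        _ = (n+1) • x + (t + n) • d := by rw [succ_nsmul, ← add_assoc, add_assoc]

/-- additive-commutator identity: `c1` central implies commutator with `n•x` is `n•c1`. -/
lemma c1_nsmul {x g : B} (h1 : -(x+g) + (g+x) ∈ centre B) (n : ℕ) :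
    -(n • x + g) + (g + n • x) = n • (-(x+g) + (g+x)) := by
  set C := -(x+g) + (g+x) with hC
  induction n with
  | zero => simp
  | succ k ih =>
      have flat : ∀ u : B, -(u + g) + (g + u) = -g + (-u + (g + u)) := by
        intro u; rw [neg_add_rev, add_assoc]
      have ihflat : -(k • x) + (g + k • x) = g + k • C := by
        have := ih
        rw [flat] at this
        have := congrArg (fun z => g + z) this
        simpa [← add_assoc, add_neg_cancel, zero_add] using this
      rw [flat, succ_nsmul]
      calc -g + (-(k • x + x) + (g + (k • x + x)))
          = -g + (-x + (-(k • x) + (g + k • x) + x)) := by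
            rw [neg_add_rev (k • x) x, add_assoc (-x) (-(k • x)), ← add_assoc g (k • x) x,
              ← add_assoc (-(k • x)) (g + k • x) x]
        _ = -g + (-x + (g + k • C + x)) := by rw [ihflat]
        _ = -g + (-x + (g + (x + k • C))) := by
            rw [add_assoc g, central_comm (central_nsmul h1 k) x]
        _ = (-g + (-x + (g + x))) + k • C := by
            rw [← add_assoc g x (k • C), ← add_assoc (-x) (g + x) (k • C),
              ← add_assoc (-g) (-x + (g + x)) (k • C)]
        _ = C + k • C := by rw [hC, flat]
        _ = (k+1) • C := (succ_nsmul' C k).symm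

/-- `c2`-type identity for powers. -/
lemma c2_pow {x g : B} (h2 : -(x+g) + x*g ∈ centre B) (n : ℕ) :
    -(x^n + g) + x^n * g = n • (-(x+g) + x*g) := by
  have hs : sbStar x g ∈ centre B := by rw [star_eq_c2 h2]; exact h2
  rw [mul_eq_add_lam, neg_add_rev, add_assoc, neg_add_cancel_left,
    lam_eq_star_add, star_pow hs, star_eq_c2 h2,
    central_comm (central_nsmul h2 n) g, neg_add_cancel_left]

end SkewBrace
namespace SkewBrace

variable {B : Type u} [SkewBrace B]

lemma shuffle {g X T E : B} (hT : T ∈ centre B) (hE : E ∈ centre B) :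
    -(X + T + g) + (g + (X + E + T)) = (-(X + g) + (g + X)) + E := by
  have hnT : -T ∈ centre B := central_neg hT
  calc -(X + T + g) + (g + (X + E + T))
      = (-g + (-T + -X)) + (g + (X + (E + T))) := by
        rw [neg_add_rev (X+T) g, neg_add_rev X T, add_assoc X E T]
    _ = -g + (-T + (-X + (g + (X + (E + T))))) := by
        rw [add_assoc, add_assoc]
    _ = -g + (-T + ((-X + (g + X)) + (E + T))) := by
        rw [← add_assoc g X (E+T), ← add_assoc (-X) (g + X) (E+T)]
    _ = -g + (((-X + (g + X)) + -T) + (E + T)) := by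
        rw [← add_assoc (-T) (-X + (g + X)) (E+T), central_comm hnT (-X + (g + X))]
    _ = -g + ((-X + (g + X)) + (E + (-T + T))) := by
        rw [add_assoc (-X + (g + X)) (-T) (E+T), ← add_assoc (-T) E T, central_comm hnT E,
          add_assoc E (-T) T]
    _ = (-g + (-X + (g + X))) + E := by
        rw [neg_add_cancel, add_zero, ← add_assoc (-g) (-X + (g + X)) E]
    _ = (-(X + g) + (g + X)) + E := by
        rw [neg_add_rev X g, add_assoc (-g) (-X) (g+X)]

lemma c1_pow {x g : B} (h1 : -(x+g) + (g+x) ∈ centre B)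
    (hd : -(x+x) + x*x ∈ centre B) (n : ℕ) :
    -(x^n + g) + (g + x^n) = n • (-(x+g) + (g+x)) := by
  obtain ⟨t, ht⟩ := pow_decomp hd n
  have hs := shuffle (g := g) (X := n • x) (T := t • (-(x+x) + x*x)) (E := (0:B))
    (central_nsmul hd t) central_zero
  rw [add_zero, add_zero] at hs
  rw [ht, hs, c1_nsmul h1 n]

lemma c3_pow {x g : B} (h1 : -(x+g) + (g+x) ∈ centre B) (h3 : -(x+g) + g*x ∈ centre B)
    (hd : -(x+x) + x*x ∈ centre B) (n : ℕ) :
    -(x^n + g) + g * x^n = n • (-(x+g) + g*x) := by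
  set C := -(x+g) + (g+x) with hC
  set c3 := -(x+g) + g*x with hc3
  set d := -(x+x) + x*x with hdd
  set e := -C + c3 with he
  have hecen : e ∈ centre B := central_add (central_neg h1) h3
  have hlamgx : lam g x = x + e := by
    have h4 : g * x = (x + g) + c3 := by rw [hc3, add_neg_cancel_left]
    rw [lam_apply, h4, ← add_assoc]
    have : -g + (x + g) = x + -C := by
      rw [hC, neg_add_rev (-(x+g)) (g+x), neg_neg, neg_add_rev g x,
        ← add_assoc x (-x + -g) (x+g), ← add_assoc x (-x) (-g), add_neg_cancel, zero_add]
    rw [this, add_assoc, he]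
  obtain ⟨t, ht⟩ := pow_decomp hd n
  have hgxn : g * x^n = g + (n • x + n • e + t • d) := by
    rw [mul_eq_add_lam, ht, map_add, map_nsmul, map_nsmul, hlamgx, central_lam hd g,
      central_nsmul_add hecen x n]
  rw [hgxn, ht, shuffle (central_nsmul hd t) (central_nsmul hecen n), c1_nsmul h1 n,
    ← central_nsmul_add hecen C n, he, add_neg_cancel_left]

end SkewBrace
namespace SkewBrace

variable {B : Type u} [SkewBrace B]

lemma IsIdeal.lam_mem {J : Set B} (hJ : IsIdeal J) (x : B) {j : B} (hj : j ∈ J) :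
    lam x j ∈ J := by
  rw [lam_eq_star_add]
  exact hJ.isSubbrace.add_mem (hJ.star_mem_left (Set.mem_univ x) hj) hj

lemma lam_one_apply (a : B) : lam (1:B) a = a := by
  rw [← zero_eq_one, lam_apply, zero_mul', neg_zero, zero_add]

lemma IsIdeal.coset_repr {J : Set B} (hJ : IsIdeal J) {x x' : B} (h : -x + x' ∈ J) :
    ∃ c ∈ J, x' = x * c := by
  refine ⟨lam x⁻¹ (-x + x'), hJ.lam_mem x⁻¹ h, ?_⟩
  rw [mul_eq_add_lam, lam_lam, mul_inv_cancel, lam_one_apply, add_neg_cancel_left]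

lemma IsIdeal.mul_wd {J : Set B} (hJ : IsIdeal J) {x x' y y' : B}
    (hx : -x + x' ∈ J) (hy : -y + y' ∈ J) : -(x * y) + x' * y' ∈ J := by
  obtain ⟨c, hc, rfl⟩ := hJ.coset_repr hx
  have hj1 : y⁻¹ * c * y ∈ J := by
    have := hJ.mul_conj_mem (Set.mem_univ y⁻¹) hc
    rwa [inv_inv] at this
  have h1 : (x*c) * y' = (x*c) * y + lam (x*c) (-y + y') := by
    conv_lhs => rw [← add_neg_cancel_left y y']
    rw [skew_distrib, lam_apply]
  have h2 : (x*c) * y = (x*y) + lam (x*y) (y⁻¹ * c * y) := by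
    rw [← mul_eq_add_lam]; group
  rw [h1, h2, add_assoc, neg_add_cancel_left]
  exact hJ.isSubbrace.add_mem (hJ.lam_mem _ hj1) (hJ.lam_mem _ hy)

lemma IsIdeal.inv_wd {J : Set B} (hJ : IsIdeal J) {x x' : B} (hx : -x + x' ∈ J) :
    -(x⁻¹) + x'⁻¹ ∈ J := by
  obtain ⟨c, hc, rfl⟩ := hJ.coset_repr hx
  have hj : x * c⁻¹ * x⁻¹ ∈ J := hJ.mul_conj_mem (Set.mem_univ x) (hJ.isSubbrace.inv_mem hc)
  have h1 : (x*c)⁻¹ = x⁻¹ + lam x⁻¹ (x * c⁻¹ * x⁻¹) := by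
    rw [← mul_eq_add_lam]; group
  rw [h1, neg_add_cancel_left]
  exact hJ.lam_mem _ hj

/-- The additive subgroup underlying an ideal. -/
def IsIdeal.addSubgroup {J : Set B} (hJ : IsIdeal J) : AddSubgroup B where
  carrier := J
  zero_mem' := hJ.isSubbrace.zero_mem
  add_mem' := fun ha hb => hJ.isSubbrace.add_mem ha hb
  neg_mem' := fun ha => hJ.isSubbrace.neg_mem ha

instance IsIdeal.normal {J : Set B} (hJ : IsIdeal J) : hJ.addSubgroup.Normal :=
  ⟨fun _ hn g => hJ.add_conj_mem (Set.mem_univ g) hn⟩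

/-- The quotient brace. -/
def QB {J : Set B} (_hJ : IsIdeal J) : Type u := B ⧸ _hJ.addSubgroup

instance {J : Set B} (hJ : IsIdeal J) : AddGroup (QB hJ) :=
  inferInstanceAs (AddGroup (B ⧸ hJ.addSubgroup))

/-- The canonical map onto the quotient brace. -/
def QB.mk {J : Set B} (hJ : IsIdeal J) (x : B) : QB hJ :=
  QuotientAddGroup.mk (s := hJ.addSubgroup) x

lemma QB.mk_eq_mk {J : Set B} (hJ : IsIdeal J) {x y : B} :
    QB.mk hJ x = QB.mk hJ y ↔ -x + y ∈ J :=
  QuotientAddGroup.eq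

lemma QB.sound {J : Set B} (hJ : IsIdeal J) {x y : B} (h : -x + y ∈ J) :
    QB.mk hJ x = QB.mk hJ y :=
  (QB.mk_eq_mk hJ).2 h

instance {J : Set B} (hJ : IsIdeal J) : Mul (QB hJ) :=
  ⟨fun a b => Quotient.map₂ (· * ·)
    (fun _ x' hx _ y' hy =>
      QuotientAddGroup.leftRel_apply.2
        (hJ.mul_wd (QuotientAddGroup.leftRel_apply.1 hx)
          (QuotientAddGroup.leftRel_apply.1 hy))) a b⟩

instance {J : Set B} (hJ : IsIdeal J) : Inv (QB hJ) :=
  ⟨fun a => Quotient.map (·⁻¹)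
    (fun x x' hx =>
      QuotientAddGroup.leftRel_apply.2
        (hJ.inv_wd (QuotientAddGroup.leftRel_apply.1 hx))) a⟩

instance {J : Set B} (hJ : IsIdeal J) : One (QB hJ) := ⟨QB.mk hJ 1⟩

lemma QB.mk_add {J : Set B} (hJ : IsIdeal J) (x y : B) :
    QB.mk hJ (x + y) = QB.mk hJ x + QB.mk hJ y := rfl

lemma QB.mk_neg {J : Set B} (hJ : IsIdeal J) (x : B) :
    QB.mk hJ (-x) = -(QB.mk hJ x) := rfl

lemma QB.mk_zero {J : Set B} (hJ : IsIdeal J) : QB.mk hJ 0 = 0 := rfl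

lemma QB.mk_mul {J : Set B} (hJ : IsIdeal J) (x y : B) :
    QB.mk hJ (x * y) = QB.mk hJ x * QB.mk hJ y := rfl

lemma QB.mk_inv {J : Set B} (hJ : IsIdeal J) (x : B) :
    QB.mk hJ (x⁻¹) = (QB.mk hJ x)⁻¹ := rfl

lemma QB.mk_one {J : Set B} (hJ : IsIdeal J) : QB.mk hJ 1 = 1 := rfl

lemma QB.mk_surjective {J : Set B} (hJ : IsIdeal J) :
    Function.Surjective (QB.mk hJ) :=
  fun q => Quotient.inductionOn q (fun a => ⟨a, rfl⟩)

instance {J : Set B} (hJ : IsIdeal J) : Group (QB hJ) where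
  mul_assoc a b c := by
    obtain ⟨a, rfl⟩ := QB.mk_surjective hJ a
    obtain ⟨b, rfl⟩ := QB.mk_surjective hJ b
    obtain ⟨c, rfl⟩ := QB.mk_surjective hJ c
    rw [← QB.mk_mul, ← QB.mk_mul, ← QB.mk_mul, ← QB.mk_mul, mul_assoc]
  one_mul a := by
    obtain ⟨a, rfl⟩ := QB.mk_surjective hJ a
    rw [← QB.mk_one, ← QB.mk_mul, one_mul]
  mul_one a := by
    obtain ⟨a, rfl⟩ := QB.mk_surjective hJ a
    rw [← QB.mk_one, ← QB.mk_mul, mul_one]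
  inv_mul_cancel a := by
    obtain ⟨a, rfl⟩ := QB.mk_surjective hJ a
    rw [← QB.mk_inv, ← QB.mk_mul, inv_mul_cancel]
    exact QB.mk_one hJ

instance {J : Set B} (hJ : IsIdeal J) : SkewBrace (QB hJ) where
  zero_eq_one := by rw [← QB.mk_zero hJ, ← QB.mk_one hJ, zero_eq_one]
  skew_distrib a b c := by
    obtain ⟨a, rfl⟩ := QB.mk_surjective hJ a
    obtain ⟨b, rfl⟩ := QB.mk_surjective hJ b
    obtain ⟨c, rfl⟩ := QB.mk_surjective hJ c
    rw [← QB.mk_add, ← QB.mk_mul, ← QB.mk_mul, ← QB.mk_mul, ← QB.mk_neg, ← QB.mk_add,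
      ← QB.mk_add, skew_distrib]

lemma QB.mk_eq_zero {J : Set B} (hJ : IsIdeal J) {x : B} :
    QB.mk hJ x = 0 ↔ x ∈ J :=
  QuotientAddGroup.eq_zero_iff x

lemma QB.mk_pow {J : Set B} (hJ : IsIdeal J) (x : B) (n : ℕ) :
    QB.mk hJ (x ^ n) = (QB.mk hJ x) ^ n := by
  induction n with
  | zero => rw [pow_zero, pow_zero, QB.mk_one]
  | succ k ih => rw [pow_succ, pow_succ, QB.mk_mul, ih]

lemma QB.mk_nsmul {J : Set B} (hJ : IsIdeal J) (x : B) (n : ℕ) :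
    QB.mk hJ (n • x) = n • (QB.mk hJ x) := by
  induction n with
  | zero => rw [zero_smul, zero_smul, QB.mk_zero]
  | succ k ih => rw [succ_nsmul, succ_nsmul, QB.mk_add, ih]

lemma QB.mk_star {J : Set B} (hJ : IsIdeal J) (x y : B) :
    QB.mk hJ (sbStar x y) = sbStar (QB.mk hJ x) (QB.mk hJ y) := rfl

end SkewBrace
namespace SkewBrace

variable {B : Type u} [SkewBrace B]

lemma zetaOrd_zero : zetaOrd B 0 = {0} := by
  unfold zetaOrd
  rw [Ordinal.limitRecOn_zero]

lemma zetaOrd_succ (o : Ordinal.{u}) :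
    zetaOrd B (o+1) = {a : B | ∀ b : B, -(a + b) + (b + a) ∈ zetaOrd B o ∧
      -(a + b) + a * b ∈ zetaOrd B o ∧ -(a + b) + b * a ∈ zetaOrd B o} := by
  unfold zetaOrd
  rw [Ordinal.add_one_eq_succ, Ordinal.limitRecOn_succ]

lemma zetaOrd_limit {o : Ordinal.{u}} (h : Order.IsSuccLimit o) :
    zetaOrd B o = ⋃ (β : {β : Ordinal.{u} // β < o}), zetaOrd B β.1 := by
  unfold zetaOrd
  rw [Ordinal.limitRecOn_limit _ _ _ _ h]

lemma mem_zetaOrd_limit {o : Ordinal.{u}} (h : Order.IsSuccLimit o) {a : B} :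
    a ∈ zetaOrd B o ↔ ∃ β < o, a ∈ zetaOrd B β := by
  rw [zetaOrd_limit h]
  simp only [Set.mem_iUnion, Subtype.exists]
  exact ⟨fun ⟨β, hβ, hm⟩ => ⟨β, hβ, hm⟩, fun ⟨β, hβ, hm⟩ => ⟨β, hβ, hm⟩⟩

lemma isIdeal_centre : IsIdeal (centre B) := by
  refine ⟨Set.subset_univ _, ⟨central_zero, fun a b ha hb => central_add ha hb,
    fun a ha => central_neg ha, ?_, ?_⟩, ?_, ?_, ?_, ?_⟩
  · intro a b ha hb
    rw [central_mul ha b]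
    exact central_add ha hb
  · intro a ha
    rw [central_inv_eq_neg ha]
    exact central_neg ha
  · intro b _ a ha
    rw [central_conj ha b]
    exact ha
  · intro b _ a ha
    have : b * a = a * b := by
      rw [central_mul ha b, central_mul' ha b, central_comm ha b]
    rw [this, mul_assoc, mul_inv_cancel, mul_one]
    exact ha
  · intro b _ a ha
    rw [central_star_right ha b]
    exact central_zero
  · intro a ha b _
    rw [central_star_left ha b]
    exact central_zero

lemma isIdeal_preimage {J : Set B} (hJ : IsIdeal J) {C : Set (QB hJ)}
    (hC : IsIdeal C) : IsIdeal ((QB.mk hJ) ⁻¹' C) := by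
  refine ⟨Set.subset_univ _, ⟨?_, ?_, ?_, ?_, ?_⟩, ?_, ?_, ?_, ?_⟩
  · show QB.mk hJ 0 ∈ C
    rw [QB.mk_zero]
    exact hC.isSubbrace.zero_mem
  · intro a b ha hb
    show QB.mk hJ (a+b) ∈ C
    rw [QB.mk_add]
    exact hC.isSubbrace.add_mem ha hb
  · intro a ha
    show QB.mk hJ (-a) ∈ C
    rw [QB.mk_neg]
    exact hC.isSubbrace.neg_mem ha
  · intro a b ha hb
    show QB.mk hJ (a*b) ∈ C
    rw [QB.mk_mul]
    exact hC.isSubbrace.mul_mem ha hb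
  · intro a ha
    show QB.mk hJ (a⁻¹) ∈ C
    rw [QB.mk_inv]
    exact hC.isSubbrace.inv_mem ha
  · intro b _ a ha
    show QB.mk hJ (b + a + -b) ∈ C
    rw [QB.mk_add, QB.mk_add, QB.mk_neg]
    exact hC.add_conj_mem (Set.mem_univ _) ha
  · intro b _ a ha
    show QB.mk hJ (b * a * b⁻¹) ∈ C
    rw [QB.mk_mul, QB.mk_mul, QB.mk_inv]
    exact hC.mul_conj_mem (Set.mem_univ _) ha
  · intro b _ a ha
    show QB.mk hJ (sbStar b a) ∈ C
    rw [QB.mk_star]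
    exact hC.star_mem_left (Set.mem_univ _) ha
  · intro a ha b _
    show QB.mk hJ (sbStar a b) ∈ C
    rw [QB.mk_star]
    exact hC.star_mem_right ha (Set.mem_univ _)

/-- The successor term of the upper central series is the preimage of the centre
of the quotient. -/
lemma zetaOrd_succ_eq_preimage {γ : Ordinal.{u}} (hγ : IsIdeal (zetaOrd B γ)) :
    zetaOrd B (γ+1) = (QB.mk hγ) ⁻¹' (centre (QB hγ)) := by
  ext a
  rw [zetaOrd_succ]
  constructor
  · intro ha
    show QB.mk hγ a ∈ centre (QB hγ)
    rw [mem_centre_iff]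
    intro q
    obtain ⟨b, rfl⟩ := QB.mk_surjective hγ q
    obtain ⟨h1, h2, h3⟩ := ha b
    refine ⟨?_, ?_, ?_⟩
    · rw [← QB.mk_add, ← QB.mk_add]
      exact QB.sound hγ h1
    · rw [← QB.mk_add, ← QB.mk_mul]
      exact QB.sound hγ h2
    · rw [← QB.mk_add, ← QB.mk_mul]
      exact QB.sound hγ h3
  · intro ha b
    have := mem_centre_iff.1 ha (QB.mk hγ b)
    refine ⟨?_, ?_, ?_⟩
    · have h1 := this.1
      rw [← QB.mk_add, ← QB.mk_add] at h1
      exact (QB.mk_eq_mk hγ).1 h1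
    · have h2 := this.2.1
      rw [← QB.mk_add, ← QB.mk_mul] at h2
      exact (QB.mk_eq_mk hγ).1 h2
    · have h3 := this.2.2
      rw [← QB.mk_add, ← QB.mk_mul] at h3
      exact (QB.mk_eq_mk hγ).1 h3

lemma zetaOrd_subset_succ {γ : Ordinal.{u}} (hγ : IsIdeal (zetaOrd B γ)) :
    zetaOrd B γ ⊆ zetaOrd B (γ+1) := by
  intro a ha
  rw [zetaOrd_succ_eq_preimage hγ]
  show QB.mk hγ a ∈ centre (QB hγ)
  rw [(QB.mk_eq_zero hγ).2 ha]
  exact central_zero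

lemma isIdeal_zero_set : IsIdeal ({0} : Set B) := by
  have hz : ∀ x : B, x⁻¹ = x → True := fun _ _ => trivial
  refine ⟨Set.subset_univ _, ⟨rfl, ?_, ?_, ?_, ?_⟩, ?_, ?_, ?_, ?_⟩ <;>
    simp only [Set.mem_singleton_iff]
  · rintro a b rfl rfl; rw [add_zero]
  · rintro a rfl; rw [neg_zero]
  · rintro a b rfl rfl; rw [mul_zero']
  · rintro a rfl; rw [zero_eq_one, inv_one]
  · rintro b - a rfl; rw [add_zero, add_neg_cancel]
  · rintro b - a rfl; rw [mul_zero', mul_inv_cancel, ← zero_eq_one]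
  · rintro b - a rfl; rw [sbStar, mul_zero', neg_zero, add_zero, neg_add_cancel]
  · rintro a rfl b -; rw [sbStar, zero_mul', neg_zero, zero_add, add_neg_cancel]

theorem zetaOrd_ideal_mono :
    ∀ o : Ordinal.{u}, IsIdeal (zetaOrd B o) ∧
      ∀ α ≤ o, zetaOrd B α ⊆ zetaOrd B o := by
  intro o
  induction o using Ordinal.induction with
  | h o IH =>
    rcases Ordinal.zero_or_succ_or_isSuccLimit o with h0 | ⟨γ, hγ⟩ | hlim
    · subst h0
      constructor
      · rw [zetaOrd_zero]; exact isIdeal_zero_set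
      · intro α hα
        rw [nonpos_iff_eq_zero.1 hα]
    · have hγ' : o = γ + 1 := by rw [← hγ, Ordinal.add_one_eq_succ]
      subst hγ'
      have hlt : γ < γ + 1 := by
        rw [Ordinal.add_one_eq_succ]; exact Order.lt_succ γ
      obtain ⟨hid, hmono⟩ := IH γ hlt
      constructor
      · rw [zetaOrd_succ_eq_preimage hid]
        exact isIdeal_preimage hid isIdeal_centre
      · intro α hα
        rcases eq_or_lt_of_le hα with rfl | hlt'
        · exact subset_rfl
        · have : α ≤ γ := by
            rwa [Ordinal.add_one_eq_succ, Order.lt_succ_iff] at hlt'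
          exact (hmono α this).trans (zetaOrd_subset_succ hid)
    · have hmem : ∀ {a : B}, a ∈ zetaOrd B o ↔ ∃ β < o, a ∈ zetaOrd B β :=
        fun {a} => mem_zetaOrd_limit hlim
      have up : ∀ {β β' : Ordinal.{u}}, β ≤ β' → β' < o →
          zetaOrd B β ⊆ zetaOrd B β' := fun hle hlt => (IH _ hlt).2 _ hle
      have zmem : (0:B) ∈ zetaOrd B o :=
        hmem.2 ⟨0, hlim.pos, by rw [zetaOrd_zero]; rfl⟩
      constructor
      · refine ⟨Set.subset_univ _, ⟨zmem, ?_, ?_, ?_, ?_⟩, ?_, ?_, ?_, ?_⟩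
        · intro a b ha hb
          obtain ⟨β1, h1, ha⟩ := hmem.1 ha
          obtain ⟨β2, h2, hb⟩ := hmem.1 hb
          have hm : max β1 β2 < o := max_lt h1 h2
          exact hmem.2 ⟨max β1 β2, hm, (IH _ hm).1.isSubbrace.add_mem
            (up (le_max_left _ _) hm ha) (up (le_max_right _ _) hm hb)⟩
        · intro a ha
          obtain ⟨β, h1, ha⟩ := hmem.1 ha
          exact hmem.2 ⟨β, h1, (IH _ h1).1.isSubbrace.neg_mem ha⟩
        · intro a b ha hb
          obtain ⟨β1, h1, ha⟩ := hmem.1 ha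
          obtain ⟨β2, h2, hb⟩ := hmem.1 hb
          have hm : max β1 β2 < o := max_lt h1 h2
          exact hmem.2 ⟨max β1 β2, hm, (IH _ hm).1.isSubbrace.mul_mem
            (up (le_max_left _ _) hm ha) (up (le_max_right _ _) hm hb)⟩
        · intro a ha
          obtain ⟨β, h1, ha⟩ := hmem.1 ha
          exact hmem.2 ⟨β, h1, (IH _ h1).1.isSubbrace.inv_mem ha⟩
        · intro b _ a ha
          obtain ⟨β, h1, ha⟩ := hmem.1 ha
          exact hmem.2 ⟨β, h1, (IH _ h1).1.add_conj_mem (Set.mem_univ b) ha⟩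
        · intro b _ a ha
          obtain ⟨β, h1, ha⟩ := hmem.1 ha
          exact hmem.2 ⟨β, h1, (IH _ h1).1.mul_conj_mem (Set.mem_univ b) ha⟩
        · intro b _ a ha
          obtain ⟨β, h1, ha⟩ := hmem.1 ha
          exact hmem.2 ⟨β, h1, (IH _ h1).1.star_mem_left (Set.mem_univ b) ha⟩
        · intro a ha b _
          obtain ⟨β, h1, ha⟩ := hmem.1 ha
          exact hmem.2 ⟨β, h1, (IH _ h1).1.star_mem_right ha (Set.mem_univ b)⟩
      · intro α hα
        rcases eq_or_lt_of_le hα with rfl | hlt'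
        · exact subset_rfl
        · intro a ha
          exact hmem.2 ⟨α, hlt', ha⟩

lemma isIdeal_zetaOrd (o : Ordinal.{u}) : IsIdeal (zetaOrd B o) :=
  (zetaOrd_ideal_mono o).1

lemma zetaOrd_mono {α β : Ordinal.{u}} (h : α ≤ β) :
    zetaOrd B α ⊆ zetaOrd B β :=
  (zetaOrd_ideal_mono β).2 α h

end SkewBrace
namespace SkewBrace

variable {B : Type u} [SkewBrace B]

lemma subbraceClosure_mono {E F : Set B} (h : E ⊆ F) :
    subbraceClosure E ⊆ subbraceClosure F :=
  subbraceClosure_le (isSubbrace_subbraceClosure F) (h.trans (subset_subbraceClosure F))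

lemma subbraceClosure_union_zero (E : Set B) :
    subbraceClosure (E ∪ {0}) = subbraceClosure E := by
  apply Set.Subset.antisymm
  · refine subbraceClosure_le (isSubbrace_subbraceClosure E) (Set.union_subset
      (subset_subbraceClosure E) ?_)
    intro x hx
    rw [Set.mem_singleton_iff] at hx
    subst hx
    exact (isSubbrace_subbraceClosure E).zero_mem
  · exact subbraceClosure_mono Set.subset_union_left

lemma isSubbrace_preimage_mk {J : Set B} (hJ : IsIdeal J) {S : Set (QB hJ)}
    (hS : IsSubbrace S) : IsSubbrace ((QB.mk hJ) ⁻¹' S) := by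
  refine ⟨?_, ?_, ?_, ?_, ?_⟩
  · show QB.mk hJ 0 ∈ S; rw [QB.mk_zero]; exact hS.zero_mem
  · intro a b ha hb; show QB.mk hJ (a+b) ∈ S; rw [QB.mk_add]; exact hS.add_mem ha hb
  · intro a ha; show QB.mk hJ (-a) ∈ S; rw [QB.mk_neg]; exact hS.neg_mem ha
  · intro a b ha hb; show QB.mk hJ (a*b) ∈ S; rw [QB.mk_mul]; exact hS.mul_mem ha hb
  · intro a ha; show QB.mk hJ (a⁻¹) ∈ S; rw [QB.mk_inv]; exact hS.inv_mem ha

lemma isSubbrace_image_mk {J : Set B} (hJ : IsIdeal J) {S : Set B}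
    (hS : IsSubbrace S) : IsSubbrace ((QB.mk hJ) '' S) := by
  refine ⟨⟨0, hS.zero_mem, QB.mk_zero hJ⟩, ?_, ?_, ?_, ?_⟩
  · rintro _ _ ⟨a, ha, rfl⟩ ⟨b, hb, rfl⟩
    exact ⟨a + b, hS.add_mem ha hb, QB.mk_add hJ a b⟩
  · rintro _ ⟨a, ha, rfl⟩
    exact ⟨-a, hS.neg_mem ha, QB.mk_neg hJ a⟩
  · rintro _ _ ⟨a, ha, rfl⟩ ⟨b, hb, rfl⟩
    exact ⟨a * b, hS.mul_mem ha hb, QB.mk_mul hJ a b⟩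
  · rintro _ ⟨a, ha, rfl⟩
    exact ⟨a⁻¹, hS.inv_mem ha, QB.mk_inv hJ a⟩

lemma image_subbraceClosure {J : Set B} (hJ : IsIdeal J) (E : Set B) :
    QB.mk hJ '' subbraceClosure E = subbraceClosure (QB.mk hJ '' E) := by
  apply Set.Subset.antisymm
  · rw [Set.image_subset_iff]
    refine subbraceClosure_le (isSubbrace_preimage_mk hJ (isSubbrace_subbraceClosure _)) ?_
    intro e he
    exact subset_subbraceClosure _ ⟨e, he, rfl⟩
  · exact subbraceClosure_le (isSubbrace_image_mk hJ (isSubbrace_subbraceClosure E))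
      (Set.image_mono (subset_subbraceClosure E))

lemma image_closure_singleton {J : Set B} (hJ : IsIdeal J) (a : B) :
    QB.mk hJ '' subbraceClosure {a} = subbraceClosure {QB.mk hJ a} := by
  rw [image_subbraceClosure, Set.image_singleton]

lemma image_closure_union_ideal {J : Set B} (hJ : IsIdeal J) (a : B) :
    QB.mk hJ '' subbraceClosure ({a} ∪ J) = subbraceClosure {QB.mk hJ a} := by
  rw [image_subbraceClosure, Set.image_union, Set.image_singleton]
  have hJ0 : QB.mk hJ '' J = {0} := by
    apply Set.Subset.antisymm
    · rintro _ ⟨j, hj, rfl⟩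
      exact (QB.mk_eq_zero hJ).2 hj
    · rintro x hx
      rw [Set.mem_singleton_iff] at hx
      subst hx
      exact ⟨0, hJ.isSubbrace.zero_mem, QB.mk_zero hJ⟩
  rw [hJ0, subbraceClosure_union_zero]

lemma elemOrderMod_eq {J : Set B} (hJ : IsIdeal J) (a : B) :
    elemOrderMod J a = elemOrder (QB.mk hJ a) := by
  have hfun : (fun x : B => {y : B | -x + y ∈ J}) =
      (fun q : QB hJ => {y : B | QB.mk hJ y = q}) ∘ QB.mk hJ := by
    funext x
    ext y
    simp only [Set.mem_setOf_eq, Function.comp_apply]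
    rw [eq_comm, QB.mk_eq_mk]
  have hinj : Function.Injective (fun q : QB hJ => {y : B | QB.mk hJ y = q}) := by
    intro q1 q2 hq
    obtain ⟨y, rfl⟩ := QB.mk_surjective hJ q1
    have h2 : {z : B | QB.mk hJ z = QB.mk hJ y} = {z : B | QB.mk hJ z = q2} := hq
    have h3 : y ∈ {z : B | QB.mk hJ z = q2} := (Set.ext_iff.1 h2 y).1 rfl
    exact h3
  rw [elemOrderMod, hfun, Set.image_comp, image_closure_union_ideal hJ a,
    Nat.card_image_of_injective hinj, elemOrder]

/-- The additive subgroup underlying a subbrace. -/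
def IsSubbrace.addSubgroup {S : Set B} (hS : IsSubbrace S) : AddSubgroup B where
  carrier := S
  zero_mem' := hS.zero_mem
  add_mem' := fun ha hb => hS.add_mem ha hb
  neg_mem' := fun ha => hS.neg_mem ha

lemma elemOrderMod_dvd {J : Set B} (hJ : IsIdeal J) (a : B) :
    elemOrderMod J a ∣ elemOrder a := by
  rw [elemOrderMod_eq hJ a, elemOrder, elemOrder, ← image_closure_singleton hJ a]
  set A := subbraceClosure ({a} : Set B) with hA
  have hSB : IsSubbrace A := isSubbrace_subbraceClosure _
  set H := hSB.addSubgroup with hH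
  let f : H →+ QB hJ := (QuotientAddGroup.mk' hJ.addSubgroup).comp H.subtype
  have hrange : (QB.mk hJ '' A) = Set.range f := by
    ext q
    constructor
    · rintro ⟨x, hx, rfl⟩
      exact ⟨⟨x, hx⟩, rfl⟩
    · rintro ⟨⟨x, hx⟩, rfl⟩
      exact ⟨x, hx, rfl⟩
  rw [hrange]
  have h1 : Nat.card (Set.range ⇑f) = Nat.card (↥H ⧸ f.ker) := by
    apply Nat.card_congr
    exact ((Equiv.setCongr (AddMonoidHom.coe_range f)).symm.trans
      (QuotientAddGroup.quotientKerEquivRange f).toEquiv.symm)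
  rw [h1]
  have h2 : Nat.card ↥A = Nat.card H := rfl
  rw [h2]
  exact AddSubgroup.card_quotient_dvd_card f.ker

end SkewBrace
namespace SkewBrace

variable {B : Type u} [SkewBrace B]

lemma descent_core (π : Set ℕ) (α : Ordinal.{u})
    (IH : ∀ β < α, ∀ w ∈ zetaOrd B (β+1), IsPiElementMod π (zetaOrd B β) w → w ∈ zetaOrd B β)
    (x : B) (hx : x ∈ zetaOrd B (α+1)) (hpi : IsPiElementMod π (zetaOrd B α) x)
    (hnpos : 0 < elemOrderMod (zetaOrd B α) x)
    (hexγ : ∃ γ : Ordinal.{u}, γ < α ∧ γ + 1 ≤ α ∧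
      x ^ (elemOrderMod (zetaOrd B α) x) ∈ zetaOrd B (γ+1)) :
    x ∈ zetaOrd B α := by
  set n := elemOrderMod (zetaOrd B α) x with hndef
  obtain ⟨γ, hγα, hγ1α, hxnγ⟩ := hexγ
  rw [zetaOrd_succ] at hx
  suffices hsuff : ∀ g : B, -(x + g) + (g + x) ∈ zetaOrd B γ ∧
      -(x + g) + x * g ∈ zetaOrd B γ ∧ -(x + g) + g * x ∈ zetaOrd B γ by
    apply zetaOrd_mono hγ1α
    rw [zetaOrd_succ]
    exact hsuff
  intro g
  set T : Set Ordinal.{u} := {β | -(x + g) + (g + x) ∈ zetaOrd B β ∧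
      -(x + g) + x * g ∈ zetaOrd B β ∧ -(x + g) + g * x ∈ zetaOrd B β ∧
      -(x + x) + x * x ∈ zetaOrd B β} with hTdef
  have hαT : α ∈ T := ⟨(hx g).1, (hx g).2.1, (hx g).2.2, (hx x).2.1⟩
  have hTne : T.Nonempty := ⟨α, hαT⟩
  set m := sInf T with hmdef
  have hmT : m ∈ T := csInf_mem hTne
  have hmα : m ≤ α := csInf_le (OrderBot.bddBelow T) hαT
  have hmγ : m ≤ γ := by
    by_contra hgt
    push_neg at hgt
    rcases Ordinal.zero_or_succ_or_isSuccLimit m with hm0 | ⟨ε, hmsucc⟩ | hmlim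
    · rw [hm0] at hgt; exact not_lt_of_ge (zero_le (a := γ)) hgt
    · rw [← Ordinal.add_one_eq_succ, eq_comm] at hmsucc
      have hγε : γ ≤ ε := by
        rw [hmsucc, Ordinal.add_one_eq_succ, Order.lt_succ_iff] at hgt
        exact hgt
      have hεm : ε < m := by
        rw [hmsucc, Ordinal.add_one_eq_succ]
        exact Order.lt_succ ε
      have hεα : ε < α := lt_of_lt_of_le hεm hmα
      have hK : IsIdeal (zetaOrd B ε) := isIdeal_zetaOrd ε
      have hmem := hmT
      rw [hmsucc] at hmem
      obtain ⟨h1, h2, h3, h4⟩ := hmem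
      have hcent : ∀ w : B, w ∈ zetaOrd B (ε+1) → QB.mk hK w ∈ centre (QB hK) := by
        intro w hw
        rw [zetaOrd_succ_eq_preimage hK] at hw
        exact hw
      have hxnε : x ^ n ∈ zetaOrd B (ε+1) :=
        zetaOrd_mono (add_le_add_left hγε 1) hxnγ
      have hXc : (QB.mk hK x) ^ n ∈ centre (QB hK) := by
        rw [← QB.mk_pow]
        exact hcent _ hxnε
      set X := QB.mk hK x with hXdef
      set G := QB.mk hK g with hGdef
      have e1 : QB.mk hK (-(x+g) + (g+x)) = -(X+G) + (G+X) := by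
        rw [QB.mk_add, QB.mk_neg, QB.mk_add, QB.mk_add]
      have e2 : QB.mk hK (-(x+g) + x*g) = -(X+G) + X*G := by
        rw [QB.mk_add, QB.mk_neg, QB.mk_add, QB.mk_mul]
      have e3 : QB.mk hK (-(x+g) + g*x) = -(X+G) + G*X := by
        rw [QB.mk_add, QB.mk_neg, QB.mk_add, QB.mk_mul]
      have e4 : QB.mk hK (-(x+x) + x*x) = -(X+X) + X*X := by
        rw [QB.mk_add, QB.mk_neg, QB.mk_add, QB.mk_mul]
      have hc1 : -(X+G) + (G+X) ∈ centre (QB hK) := e1 ▸ hcent _ h1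
      have hc2 : -(X+G) + X*G ∈ centre (QB hK) := e2 ▸ hcent _ h2
      have hc3 : -(X+G) + G*X ∈ centre (QB hK) := e3 ▸ hcent _ h3
      have hc4 : -(X+X) + X*X ∈ centre (QB hK) := e4 ▸ hcent _ h4
      have k1 : n • (-(X+G) + (G+X)) = 0 := by
        rw [← c1_pow hc1 hc4 n]; exact central_c1 hXc G
      have k2 : n • (-(X+G) + X*G) = 0 := by
        rw [← c2_pow hc2 n]; exact central_c2 hXc G
      have k3 : n • (-(X+G) + G*X) = 0 := by
        rw [← c3_pow hc1 hc3 hc4 n]; exact central_c3 hXc G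
      have k4 : n • (-(X+X) + X*X) = 0 := by
        rw [← c2_pow hc4 n]; exact central_c2 hXc X
      have step : ∀ w : B, w ∈ zetaOrd B (ε+1) → n • (QB.mk hK w) = 0 →
          w ∈ zetaOrd B ε := by
        intro w hw hnw
        have hwc := hcent w hw
        have hdvd : addOrderOf (QB.mk hK w) ∣ n := addOrderOf_dvd_of_nsmul_eq_zero hnw
        have hordpos : 0 < addOrderOf (QB.mk hK w) := by
          rcases Nat.eq_zero_or_pos (addOrderOf (QB.mk hK w)) with hz | hpos
          · rw [hz] at hdvd
            have := Nat.eq_zero_of_zero_dvd hdvd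
            omega
          · exact hpos
        apply IH ε hεα w hw
        constructor
        · rw [elemOrderMod_eq hK, elemOrder_central hwc]
          exact hordpos
        · intro p hp hpd
          apply hpi.2 p hp
          rw [elemOrderMod_eq hK, elemOrder_central hwc] at hpd
          exact dvd_trans hpd hdvd
      have hεT : ε ∈ T := by
        refine ⟨step _ h1 ?_, step _ h2 ?_, step _ h3 ?_, step _ h4 ?_⟩
        · rw [e1]; exact k1
        · rw [e2]; exact k2
        · rw [e3]; exact k3
        · rw [e4]; exact k4
      have hle := csInf_le (OrderBot.bddBelow T) hεT
      exact absurd hle (not_le.2 hεm)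
    · obtain ⟨h1, h2, h3, h4⟩ := hmT
      rw [mem_zetaOrd_limit hmlim] at h1 h2 h3 h4
      obtain ⟨β1, hb1, h1⟩ := h1
      obtain ⟨β2, hb2, h2⟩ := h2
      obtain ⟨β3, hb3, h3⟩ := h3
      obtain ⟨β4, hb4, h4⟩ := h4
      set β := max (max β1 β2) (max β3 β4) with hβdef
      have hβm : β < m := max_lt (max_lt hb1 hb2) (max_lt hb3 hb4)
      have hβT : β ∈ T :=
        ⟨zetaOrd_mono ((le_max_left β1 β2).trans (le_max_left _ _)) h1,
         zetaOrd_mono ((le_max_right β1 β2).trans (le_max_left _ _)) h2,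
         zetaOrd_mono ((le_max_left β3 β4).trans (le_max_right _ _)) h3,
         zetaOrd_mono ((le_max_right β3 β4).trans (le_max_right _ _)) h4⟩
      have hle := csInf_le (OrderBot.bddBelow T) hβT
      exact absurd hle (not_le.2 hβm)
  obtain ⟨h1, h2, h3, _⟩ := hmT
  exact ⟨zetaOrd_mono hmγ h1, zetaOrd_mono hmγ h2, zetaOrd_mono hmγ h3⟩

end SkewBrace
namespace SkewBrace

variable {B : Type u} [SkewBrace B]

theorem main_descent (π : Set ℕ)
    (h : ∀ a ∈ centre B, IsPiElement π a → a = 0) :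
    ∀ α : Ordinal.{u}, ∀ x ∈ zetaOrd B (α+1),
      IsPiElementMod π (zetaOrd B α) x → x ∈ zetaOrd B α := by
  intro α
  induction α using Ordinal.induction with
  | h α IH =>
  intro x hx hpi
  have hJ : IsIdeal (zetaOrd B α) := isIdeal_zetaOrd α
  have hcen : QB.mk hJ x ∈ centre (QB hJ) := by
    rw [zetaOrd_succ_eq_preimage hJ] at hx
    exact hx
  have hnord : elemOrderMod (zetaOrd B α) x = addOrderOf (QB.mk hJ x) := by
    rw [elemOrderMod_eq hJ, elemOrder_central hcen]
  have hnpos : 0 < elemOrderMod (zetaOrd B α) x := hpi.1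
  set n := elemOrderMod (zetaOrd B α) x with hndef
  have hxn : x ^ n ∈ zetaOrd B α := by
    have h0 : (QB.mk hJ x) ^ n = 0 := by
      rw [central_pow hcen, hnord, addOrderOf_nsmul_eq_zero]
    rw [← QB.mk_pow] at h0
    exact (QB.mk_eq_zero hJ).1 h0
  rcases Ordinal.zero_or_succ_or_isSuccLimit α with h0 | ⟨γ0, hsucc⟩ | hlim
  · -- base case : α = 0
    subst h0
    have hxc : x ∈ centre B := by
      rw [zetaOrd_succ] at hx
      rw [mem_centre_iff]
      intro b
      obtain ⟨h1, h2, h3⟩ := hx b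
      rw [zetaOrd_zero, Set.mem_singleton_iff] at h1 h2 h3
      exact ⟨neg_add_eq_zero.1 h1, neg_add_eq_zero.1 h2, neg_add_eq_zero.1 h3⟩
    have hinj : Function.Injective (QB.mk hJ) := by
      intro u v huv
      have hm := (QB.mk_eq_mk hJ).1 huv
      rw [zetaOrd_zero, Set.mem_singleton_iff] at hm
      exact neg_add_eq_zero.1 hm
    have hordeq : addOrderOf (QB.mk hJ x) = addOrderOf x := by
      let f : B →+ QB hJ := QuotientAddGroup.mk' hJ.addSubgroup
      exact addOrderOf_injective f hinj x
    have hxpi : IsPiElement π x := by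
      have he : elemOrder x = n := by
        rw [elemOrder_central hxc, ← hordeq, ← hnord]
      constructor
      · rw [he]; exact hnpos
      · intro p hp hpd
        rw [he] at hpd
        exact hpi.2 p hp hpd
    rw [zetaOrd_zero, Set.mem_singleton_iff]
    exact h x hxc hxpi
  · -- successor or limit: find γ < α with x^n ∈ ζ_{γ+1}, γ+1 ≤ α
    have hexγ : ∃ γ : Ordinal.{u}, γ < α ∧ γ + 1 ≤ α ∧ x^n ∈ zetaOrd B (γ+1) := by
      refine ⟨γ0, ?_, ?_, ?_⟩
      · rw [← hsucc]; exact Order.lt_succ γ0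
      · rw [← hsucc, ← Ordinal.add_one_eq_succ]
      · rw [← Ordinal.add_one_eq_succ] at hsucc
        rwa [hsucc]
    exact descent_core π α IH x hx hpi hnpos hexγ
  · have hexγ : ∃ γ : Ordinal.{u}, γ < α ∧ γ + 1 ≤ α ∧ x^n ∈ zetaOrd B (γ+1) := by
      obtain ⟨β, hβ, hxβ⟩ := (mem_zetaOrd_limit hlim).1 hxn
      refine ⟨β, hβ, ?_, zetaOrd_subset_succ (isIdeal_zetaOrd β) hxβ⟩
      rw [Ordinal.add_one_eq_succ]
      exact (Order.IsSuccLimit.succ_lt hlim hβ).le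
    exact descent_core π α IH x hx hpi hnpos hexγ

end SkewBrace
namespace SkewBrace

variable {B : Type u} [SkewBrace B]

theorem zeta_pi_free (π : Set ℕ)
    (h : ∀ a ∈ centre B, IsPiElement π a → a = 0) :
    ∀ o : Ordinal.{u}, ∀ a ∈ zetaOrd B o, IsPiElement π a → a = 0 := by
  intro o
  induction o using Ordinal.induction with
  | h o IH =>
  intro a ha hpia
  rcases Ordinal.zero_or_succ_or_isSuccLimit o with h0 | ⟨γ, hsucc⟩ | hlim
  · subst h0
    rw [zetaOrd_zero, Set.mem_singleton_iff] at ha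
    exact ha
  · rw [← Ordinal.add_one_eq_succ] at hsucc
    subst hsucc
    have hγlt : γ < γ + 1 := by
      rw [Ordinal.add_one_eq_succ]; exact Order.lt_succ γ
    have hK : IsIdeal (zetaOrd B γ) := isIdeal_zetaOrd γ
    have hdvd : elemOrderMod (zetaOrd B γ) a ∣ elemOrder a := elemOrderMod_dvd hK a
    have hpos : 0 < elemOrderMod (zetaOrd B γ) a := by
      rcases Nat.eq_zero_or_pos (elemOrderMod (zetaOrd B γ) a) with hz | hp
      · rw [hz] at hdvd
        have := Nat.eq_zero_of_zero_dvd hdvd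
        have := hpia.1
        omega
      · exact hp
    have hmod : IsPiElementMod π (zetaOrd B γ) a := by
      refine ⟨hpos, fun p hp hpd => hpia.2 p hp (dvd_trans hpd hdvd)⟩
    have haγ : a ∈ zetaOrd B γ := main_descent π h γ a ha hmod
    exact IH γ hγlt a haγ hpia
  · obtain ⟨β, hβ, haβ⟩ := (mem_zetaOrd_limit hlim).1 ha
    exact IH β hβ a haβ hpia

end SkewBrace

/-- If `ζ(B)` is `π`-free then every factor of the upper central series,
and in particular the hypercentre, is `π`-free. -/
theorem pi_free_upper_central {B : Type u} [SkewBrace B] (π : Set ℕ)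
    (hπ : ∀ p ∈ π, Nat.Prime p)
    (h : ∀ a ∈ centre B, IsPiElement π a → a = 0) :
    (∀ α : Ordinal.{u}, ∀ a ∈ zetaOrd B (α + 1),
        IsPiElementMod π (zetaOrd B α) a → a ∈ zetaOrd B α) ∧
    ∀ o : Ordinal.{u}, ∀ a ∈ zetaOrd B o, IsPiElement π a → a = 0 :=
  ⟨SkewBrace.main_descent π h, SkewBrace.zeta_pi_free π h⟩
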